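/- arXiv:2410.19805 — 4 statements merged into one kernel-verified Lean document; each statement's English description precedes it below -/
import Mathlib

section
/- Let v : [-1,1] → ℝ be even and convex, g(x) = max(1/2 - |x|, 0), t > 0, and v_t = v + t·g. If m_t denotes the minimum of v_t on [-1,1], then the Γ-regularization (convex envelope) of v_t on [-1,1] satisfies (v_t)**(0) = m_t. -/
open Set

/-- The convex envelope of `f` on `s ⊆ ℝ`: the pointwise supremum of all convex
functions on `s` lying below `f` on `s` (the largest convex minorant). -/
noncomputable def convEnv (s : Set ℝ) (f : ℝ → ℝ) (x : ℝ) : ℝ :=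
  sSup {c | ∃ w : ℝ → ℝ, ConvexOn ℝ s w ∧ (∀ y ∈ s, w y ≤ f y) ∧ c = w x}

theorem stmt4 (v : ℝ → ℝ) (g : ℝ → ℝ)
    (hveven : ∀ x, v (-x) = v x) (hvconv : ConvexOn ℝ (Icc (-1) 1) v)
    (hg : ∀ x, g x = max (1/2 - |x|) 0)
    (t : ℝ) (ht : 0 < t) (mt : ℝ)
    (hmt : mt = sInf ((fun x => v x + t * g x) '' Icc (-1) 1)) :
    convEnv (Icc (-1) 1) (fun x => v x + t * g x) 0 = mt := by
  set f : ℝ → ℝ := fun x => v x + t * g x with hf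
  have hgnn : ∀ x, 0 ≤ g x := by intro x; rw [hg]; exact le_max_right _ _
  have hgeven : ∀ x, g (-x) = g x := by intro x; simp [hg, abs_neg]
  have hfeven : ∀ x, f (-x) = f x := by intro x; simp [hf, hveven, hgeven]
  have hmem : ∀ x ∈ Icc (-1:ℝ) 1, -x ∈ Icc (-1:ℝ) 1 := by
    intro x hx; constructor <;> [linarith [hx.2]; linarith [hx.1]]
  -- midpoint inequality for any convex w on Icc
  have hmid : ∀ w : ℝ → ℝ, ConvexOn ℝ (Icc (-1) 1) w →
      ∀ x ∈ Icc (-1:ℝ) 1, w 0 ≤ (w x + w (-x)) / 2 := by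
    intro w hw x hx
    have := hw.2 hx (hmem x hx) (by norm_num : (0:ℝ) ≤ (1:ℝ)/2)
      (by norm_num : (0:ℝ) ≤ (1:ℝ)/2) (by norm_num)
    simp only [smul_eq_mul] at this
    have h0 : (1:ℝ)/2 * x + 1/2 * (-x) = 0 := by ring
    rw [h0] at this
    linarith
  -- f is bounded below by v 0 on Icc
  have hlb : ∀ x ∈ Icc (-1:ℝ) 1, v 0 ≤ f x := by
    intro x hx
    have hv0 : v 0 ≤ (v x + v (-x)) / 2 := hmid v hvconv x hx
    rw [hveven] at hv0
    have : 0 ≤ t * g x := mul_nonneg ht.le (hgnn x)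
    simp only [hf]; linarith
  have hne : ((f '' Icc (-1:ℝ) 1)).Nonempty :=
    ⟨f 0, ⟨0, by norm_num, rfl⟩⟩
  have hbdd : BddBelow (f '' Icc (-1:ℝ) 1) := by
    refine ⟨v 0, ?_⟩
    rintro y ⟨x, hx, rfl⟩
    exact hlb x hx
  -- key: any convex minorant w satisfies w 0 ≤ f x for all x in Icc
  have hkey : ∀ w : ℝ → ℝ, ConvexOn ℝ (Icc (-1) 1) w → (∀ y ∈ Icc (-1:ℝ) 1, w y ≤ f y) →
      ∀ x ∈ Icc (-1:ℝ) 1, w 0 ≤ f x := by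
    intro w hw hwle x hx
    have h1 := hmid w hw x hx
    have h2 := hwle x hx
    have h3 := hwle (-x) (hmem x hx)
    rw [hfeven] at h3
    linarith
  set S := {c | ∃ w : ℝ → ℝ, ConvexOn ℝ (Icc (-1:ℝ) 1) w ∧ (∀ y ∈ Icc (-1:ℝ) 1, w y ≤ f y) ∧ c = w 0} with hS
  have hmtS : mt ∈ S := by
    refine ⟨fun _ => mt, convexOn_const _ (convex_Icc _ _), ?_, rfl⟩
    intro y hy
    rw [hmt]
    exact csInf_le hbdd ⟨y, hy, rfl⟩
  have hSle : ∀ c ∈ S, c ≤ mt := by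
    rintro c ⟨w, hw, hwle, rfl⟩
    rw [hmt]
    apply le_csInf hne
    rintro y ⟨x, hx, rfl⟩
    exact hkey w hw hwle x hx
  have : convEnv (Icc (-1) 1) f 0 = sSup S := rfl
  rw [this]
  exact le_antisymm (csSup_le ⟨mt, hmtS⟩ hSle) (le_csSup ⟨mt, hSle⟩ hmtS)
end

section
/- Let φ : (0,δ] → (0,∞) be continuous strictly increasing with φ(t)→0 as t→0⁺, and v : [-1,1] → ℝ even convex with v(0)=0 and v(φ(t)) = o(t·φ(t)) as t→0⁺. Let g(x)=max(1/2-|x|,0) and v_t=v+t·g. Then for the convex envelope (v_t)** on [-1,1], liminf_{t→0⁺} (v_t(0) - (v_t)**(0)) / (t·φ(t)) ≥ 1. -/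
/-!
Test the envelope at `0` against the chord of `v_t` between `±φ(t)`: every convex minorant `w`
satisfies `w 0 ≤ (w (φ t) + w (-φ t)) / 2 ≤ v_t (φ t) = v (φ t) + t / 2 - t φ(t)`, while
`v_t 0 = t / 2`. Hence the normalised gap is at least `1 - v (φ t) / (t φ(t)) → 1`.
-/

open Set Filter

open Topology

theorem ConvexOn.apply_zero_le_avg_neg {s : Set ℝ} {w : ℝ → ℝ} (hw : ConvexOn ℝ s w) {a : ℝ}
    (ha : a ∈ s) (ha' : -a ∈ s) : w 0 ≤ (w a + w (-a)) / 2 := by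
  have h := hw.2 ha ha' (by norm_num : (0 : ℝ) ≤ 1 / 2) (by norm_num : (0 : ℝ) ≤ 1 / 2)
    (by norm_num)
  simp only [smul_eq_mul] at h
  rw [show (1 / 2 : ℝ) * a + 1 / 2 * -a = 0 by ring] at h
  linarith

theorem ConvexOn.apply_zero_le_of_even {s : Set ℝ} {v : ℝ → ℝ} (hv : ConvexOn ℝ s v) {a : ℝ}
    (ha : a ∈ s) (ha' : -a ∈ s) (heven : v (-a) = v a) : v 0 ≤ v a := by
  linarith [hv.apply_zero_le_avg_neg ha ha']

theorem convEnv_zero_le_of_even {s : Set ℝ} {f : ℝ → ℝ}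
    (hne : ∃ w : ℝ → ℝ, ConvexOn ℝ s w ∧ ∀ y ∈ s, w y ≤ f y) {a : ℝ} (ha : a ∈ s)
    (ha' : -a ∈ s) (heven : f (-a) = f a) : convEnv s f 0 ≤ f a := by
  obtain ⟨w₀, hw₀, hw₀f⟩ := hne
  refine csSup_le ⟨w₀ 0, w₀, hw₀, hw₀f, rfl⟩ ?_
  rintro _ ⟨w, hw, hwf, rfl⟩
  linarith [hw.apply_zero_le_avg_neg ha ha', hwf a ha, hwf (-a) ha']

theorem le_envelope_gap_tent {v g : ℝ → ℝ} (hveven : ∀ x, v (-x) = v x)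
    (hvconv : ConvexOn ℝ (Icc (-1) 1) v) (hv0 : v 0 = 0) (hg : ∀ x, g x = max (1 / 2 - |x|) 0)
    {t a : ℝ} (ht : 0 ≤ t) (ha₀ : 0 ≤ a) (ha : a ≤ 1 / 2) :
    t * a - v a ≤ v 0 + t * g 0 - convEnv (Icc (-1) 1) (fun x => v x + t * g x) 0 := by
  have neg_mem : ∀ y ∈ Icc (-1 : ℝ) 1, -y ∈ Icc (-1 : ℝ) 1 := fun y hy =>
    ⟨by linarith [hy.2], by linarith [hy.1]⟩
  have ha_mem : a ∈ Icc (-1 : ℝ) 1 := ⟨by linarith, by linarith⟩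
  have hvt_nonneg : ∀ y ∈ Icc (-1 : ℝ) 1, (0 : ℝ) ≤ v y + t * g y := fun y hy =>
    add_nonneg (hv0 ▸ hvconv.apply_zero_le_of_even hy (neg_mem y hy) (hveven y))
      (mul_nonneg ht (hg y ▸ le_max_right _ _))
  have henv : convEnv (Icc (-1) 1) (fun x => v x + t * g x) 0 ≤ v a + t * g a :=
    convEnv_zero_le_of_even ⟨fun _ => 0, convexOn_const 0 (convex_Icc _ _), hvt_nonneg⟩
      ha_mem (neg_mem a ha_mem) (by simp only [hveven, hg, abs_neg])
  have hg0 : g 0 = 1 / 2 := by norm_num [hg]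
  have hga : g a = 1 / 2 - a := by rw [hg, abs_of_nonneg ha₀]; exact max_eq_left (by linarith)
  rw [hg0, hv0]
  rw [hga] at henv
  linarith

theorem le_liminf_coe_of_tendsto {α : Type*} {l : Filter α} [l.NeBot] {u f : α → ℝ} {c : ℝ}
    (hu : Tendsto u l (𝓝 c)) (h : ∀ᶠ x in l, u x ≤ f x) :
    (c : EReal) ≤ liminf (fun x => (f x : EReal)) l := by
  rw [← (EReal.tendsto_coe.mpr hu).liminf_eq]
  exact liminf_le_liminf (h.mono fun _ hx => EReal.coe_le_coe_iff.mpr hx)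

theorem stmt8_general (δ : ℝ) (hδ : 0 < δ) (φ : ℝ → ℝ)
    (hφpos : ∀ t ∈ Ioc 0 δ, 0 < φ t)
    (hφ0 : Tendsto φ (nhdsWithin 0 (Ioi 0)) (nhds 0))
    (v : ℝ → ℝ) (hveven : ∀ x, v (-x) = v x)
    (hvconv : ConvexOn ℝ (Icc (-1) 1) v) (hv0 : v 0 = 0)
    (hvo : (fun t => v (φ t)) =o[nhdsWithin 0 (Ioi 0)] fun t => t * φ t)
    (g : ℝ → ℝ) (hg : ∀ x, g x = max (1/2 - |x|) 0) :
    (1 : EReal) ≤ liminf (fun t =>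
      (((v 0 + t * g 0 - convEnv (Icc (-1) 1) (fun x => v x + t * g x) 0)
        / (t * φ t) : ℝ) : EReal)) (nhdsWithin 0 (Ioi 0)) := by
  have h_eventually : ∀ᶠ t in 𝓝[>] 0, t ∈ Ioc 0 δ ∧ φ t ≤ 1 / 2 :=
    Eventually.and (Ioc_mem_nhdsGT hδ) (hφ0.eventually (ge_mem_nhds (by norm_num)))
  have h_lim : Tendsto (fun t => 1 - v (φ t) / (t * φ t)) (𝓝[>] 0) (𝓝 1) := by
    simpa using hvo.tendsto_div_nhds_zero.const_sub 1
  rw [← EReal.coe_one]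
  refine le_liminf_coe_of_tendsto h_lim (h_eventually.mono fun t ⟨ht, hφt⟩ => ?_)
  have hpos : 0 < t * φ t := mul_pos ht.1 (hφpos t ht)
  rw [one_sub_div hpos.ne']
  exact div_le_div_of_nonneg_right
    (le_envelope_gap_tent hveven hvconv hv0 hg ht.1.le (hφpos t ht).le hφt) hpos.le

theorem stmt8 (δ : ℝ) (hδ : 0 < δ) (φ : ℝ → ℝ)
    (hφc : ContinuousOn φ (Ioc 0 δ)) (hφmono : StrictMonoOn φ (Ioc 0 δ))
    (hφpos : ∀ t ∈ Ioc 0 δ, 0 < φ t)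
    (hφ0 : Tendsto φ (nhdsWithin 0 (Ioi 0)) (nhds 0))
    (v : ℝ → ℝ) (hveven : ∀ x, v (-x) = v x)
    (hvconv : ConvexOn ℝ (Icc (-1) 1) v) (hv0 : v 0 = 0)
    (hvo : (fun t => v (φ t)) =o[nhdsWithin 0 (Ioi 0)] fun t => t * φ t)
    (g : ℝ → ℝ) (hg : ∀ x, g x = max (1/2 - |x|) 0) :
    (1 : EReal) ≤ liminf (fun t =>
      (((v 0 + t * g 0 - convEnv (Icc (-1) 1) (fun x => v x + t * g x) 0)
        / (t * φ t) : ℝ) : EReal)) (nhdsWithin 0 (Ioi 0)) :=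
  stmt8_general δ hδ φ hφpos hφ0 v hveven hvconv hv0 hvo g hg
end

section
/- Let v : [-1,1] → ℝ be smooth, even, strictly convex. Then u : closed unit disk → ℝ defined by u(x₁,x₂) = v(√(x₁²+x₂²)) is strictly convex on the closed unit disk, and smooth provided v'(0)=0 and all odd derivatives of v vanish at 0. -/
open Set

section Aux

/-- Strict monotonicity on [0,1] of an even strictly convex function. -/
lemma even_strictConvex_lt_aux {v : ℝ → ℝ}
    (hvconv : StrictConvexOn ℝ (Icc (-1 : ℝ) 1) v)
    (hveven : ∀ x, v (-x) = v x) {a b : ℝ} (ha : 0 ≤ a) (hab : a < b) (hb : b ≤ 1) :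
    v a < v b := by
  have hb0 : 0 < b := lt_of_le_of_lt ha hab
  set t : ℝ := (a + b) / (2 * b) with ht
  have ht0 : 0 < t := by positivity
  have ht1 : t < 1 := by
    rw [div_lt_one (by positivity)]
    linarith
  have hmem1 : b ∈ Icc (-1 : ℝ) 1 := ⟨by linarith, hb⟩
  have hmem2 : -b ∈ Icc (-1 : ℝ) 1 := ⟨by linarith, by linarith⟩
  have hne : b ≠ -b := by intro h; linarith
  have key := hvconv.2 hmem1 hmem2 hne ht0 (by linarith : (0:ℝ) < 1 - t) (by ring)
  have hcomb : t • b + (1 - t) • (-b) = a := by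
    simp only [smul_eq_mul, ht]
    field_simp
    ring
  rw [hcomb, hveven] at key
  calc v a < t * v b + (1 - t) * v b := key
    _ = v b := by ring

end Aux

section Aux2

/-- Weighted averages `∫₀¹ s^k g(s t) ds`. -/
noncomputable def wavg_aux (k : ℕ) (g : ℝ → ℝ) (t : ℝ) : ℝ :=
  ∫ s in (0:ℝ)..1, s ^ k * g (s * t)

lemma wavg_hasDerivAt_aux (k : ℕ) (g : ℝ → ℝ) (hg : ContDiff ℝ (⊤ : ℕ∞) g) (t : ℝ) :
    HasDerivAt (wavg_aux k g) (wavg_aux (k + 1) (deriv g) t) t := by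
  have hg1 : Differentiable ℝ g := hg.differentiable (by simp)
  have hgc : Continuous (deriv g) := hg.continuous_deriv (by simp)
  obtain ⟨C, hC⟩ := (isCompact_Icc (a := -(|t| + 1)) (b := |t| + 1)).exists_bound_of_continuousOn
    hgc.continuousOn
  have key := intervalIntegral.hasDerivAt_integral_of_dominated_loc_of_deriv_le
    (μ := MeasureTheory.volume) (a := (0:ℝ)) (b := 1)
    (F := fun x s => s ^ k * g (s * x)) (F' := fun x s => s ^ (k + 1) * deriv g (s * x))
    (x₀ := t) (s := Metric.ball t 1) (bound := fun _ => C) (Metric.ball_mem_nhds t one_pos)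
    (Filter.Eventually.of_forall fun x =>
      (by have := hg1.continuous; fun_prop : Continuous fun s : ℝ => s ^ k * g (s * x)).aestronglyMeasurable)
    ((by have := hg1.continuous; fun_prop : Continuous fun s : ℝ => s ^ k * g (s * t)).intervalIntegrable 0 1)
    (by fun_prop : Continuous fun s : ℝ => s ^ (k + 1) * deriv g (s * t)).aestronglyMeasurable
    ?_ intervalIntegrable_const ?_
  · exact key.2
  · refine Filter.Eventually.of_forall fun s hs x hx => ?_
    rw [uIoc_of_le zero_le_one] at hs
    rw [Metric.mem_ball, Real.dist_eq] at hx
    have hs0 : 0 ≤ s := hs.1.le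
    have hs1 : s ≤ 1 := hs.2
    have hmem : s * x ∈ Icc (-(|t| + 1)) (|t| + 1) := by
      rw [mem_Icc, ← abs_le, abs_mul, abs_of_nonneg hs0]
      have : |x| ≤ |t| + 1 := by
        have := abs_sub_abs_le_abs_sub x t
        linarith
      nlinarith [abs_nonneg x]
    have h1 := hC _ hmem
    rw [norm_mul, norm_pow, Real.norm_of_nonneg hs0]
    calc s ^ (k + 1) * ‖deriv g (s * x)‖ ≤ 1 * C := by
          apply mul_le_mul (pow_le_one₀ hs0 hs1) h1 (norm_nonneg _) zero_le_one
      _ = C := one_mul C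
  · refine Filter.Eventually.of_forall fun s _ x _ => ?_
    have := ((hg1 (s * x)).hasDerivAt.comp x ((hasDerivAt_id x).const_mul s)).const_mul (s ^ k)
    exact this.congr_deriv (by ring)

lemma wavg_contDiff_aux (n : ℕ) : ∀ (k : ℕ) (g : ℝ → ℝ), ContDiff ℝ (⊤ : ℕ∞) g →
    ContDiff ℝ n (wavg_aux k g) := by
  induction n with
  | zero =>
    intro k g hg
    exact contDiff_zero.2 (continuous_iff_continuousAt.2 fun t =>
      (wavg_hasDerivAt_aux k g hg t).continuousAt)
  | succ n ih =>
    intro k g hg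
    have hd : deriv (wavg_aux k g) = wavg_aux (k + 1) (deriv g) :=
      funext fun t => (wavg_hasDerivAt_aux k g hg t).deriv
    have hg' : ContDiff ℝ (⊤ : ℕ∞) (deriv g) := (contDiff_infty_iff_deriv.1 hg).2
    push_cast
    rw [contDiff_succ_iff_deriv, hd]
    refine ⟨fun t => (wavg_hasDerivAt_aux k g hg t).differentiableAt, by simp, ih _ _ hg'⟩

lemma even_deriv_aux (w : ℝ → ℝ) (hw : ∀ x, w (-x) = w x) (x : ℝ) :
    deriv w (-x) = - deriv w x := by
  have h := deriv_comp_neg (f := w) (x := x)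
  have hfun : (fun x => w (-x)) = w := funext hw
  rw [hfun] at h
  linarith

lemma smooth_even_norm_aux (n : ℕ) : ∀ (w : ℝ → ℝ), ContDiff ℝ (⊤ : ℕ∞) w → (∀ x, w (-x) = w x) →
    ContDiff ℝ n (fun x : EuclideanSpace ℝ (Fin 2) => w ‖x‖) := by
  induction n with
  | zero =>
    intro w hw _
    exact contDiff_zero.2 (hw.continuous.comp continuous_norm)
  | succ n ih =>
    intro w hw hwe
    have hw1 : Differentiable ℝ w := hw.differentiable (by simp)
    have hw' : ContDiff ℝ (⊤ : ℕ∞) (deriv w) := (contDiff_infty_iff_deriv.1 hw).2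
    have hw'' : ContDiff ℝ (⊤ : ℕ∞) (deriv (deriv w)) := (contDiff_infty_iff_deriv.1 hw').2
    set h := wavg_aux 0 (deriv (deriv w)) with hh
    have hodd1 : ∀ x, deriv w (-x) = - deriv w x := even_deriv_aux w hwe
    have heven2 : ∀ x, deriv (deriv w) (-x) = deriv (deriv w) x := by
      intro x
      have h1 := deriv_comp_neg (f := deriv w) (x := x)
      have hfun : (fun x => deriv w (-x)) = fun x => - deriv w x := funext hodd1
      rw [hfun, deriv.fun_neg] at h1
      linarith
    have hdw0 : deriv w 0 = 0 := by
      have := hodd1 0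
      rw [neg_zero] at this
      linarith
    have hheven : ∀ x, h (-x) = h x := by
      intro x
      simp only [hh, wavg_aux]
      congr 1
      funext s
      rw [mul_neg, heven2]
    have hhs : ContDiff ℝ (⊤ : ℕ∞) h :=
      contDiff_infty.2 fun m => wavg_contDiff_aux m 0 _ hw''
    have hid : ∀ t, deriv w t = t * h t := by
      intro t
      have hF := intervalIntegral.integral_eq_sub_of_hasDerivAt (a := (0:ℝ)) (b := 1)
        (f := fun s => deriv w (s * t)) (f' := fun s => deriv (deriv w) (s * t) * t)
        (fun s _ => by
          have := ((hw'.differentiable (by simp)) (s * t)).hasDerivAt.comp s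
            ((hasDerivAt_id s).mul_const t)
          rw [one_mul] at this
          exact this)
        ((by have := hw''.continuous; fun_prop :
          Continuous fun s : ℝ => deriv (deriv w) (s * t) * t).intervalIntegrable 0 1)
      simp only [one_mul, zero_mul, hdw0, sub_zero] at hF
      rw [← hF, hh, wavg_aux, ← intervalIntegral.integral_const_mul]
      congr 1
      funext s
      ring
    have hderiv : ∀ x : EuclideanSpace ℝ (Fin 2),
        HasFDerivAt (fun x : EuclideanSpace ℝ (Fin 2) => w ‖x‖) (h ‖x‖ • innerSL ℝ x) x := by
      intro x
      rcases eq_or_ne x 0 with rfl | hx0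
      · rw [map_zero, smul_zero, hasFDerivAt_iff_isLittleO_nhds_zero]
        have h1 := (hasDerivAt_iff_isLittleO_nhds_zero.1 (hw1 0).hasDerivAt).comp_tendsto
          (tendsto_norm_zero (E := EuclideanSpace ℝ (Fin 2)))
        have h2 := h1.trans_isBigO (Asymptotics.isBigO_norm_left.2 (Asymptotics.isBigO_refl
          (fun y : EuclideanSpace ℝ (Fin 2) => y) (nhds 0)))
        simpa [Function.comp_def, hdw0] using h2
      · have hnx : 0 < ‖x‖ := norm_pos_iff.2 hx0
        have hsq : ‖x‖ ^ 2 ≠ 0 := by positivity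
        have h1 := ((hw1 (Real.sqrt (‖x‖ ^ 2))).hasDerivAt.comp _ (Real.hasDerivAt_sqrt hsq)).comp_hasFDerivAt x
          (hasStrictFDerivAt_norm_sq x).hasFDerivAt
        have hfun : ((w ∘ fun y => Real.sqrt y) ∘ fun y : EuclideanSpace ℝ (Fin 2) => ‖y‖ ^ 2) =
            fun y => w ‖y‖ := by
          funext y
          simp [Real.sqrt_sq (norm_nonneg y)]
        rw [hfun] at h1
        refine h1.congr_fderiv ?_
        rw [Real.sqrt_sq hnx.le, hid]
        ext v
        simp only [ContinuousLinearMap.smul_apply, smul_eq_mul, nsmul_eq_mul]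
        field_simp
        norm_num
    push_cast
    rw [contDiff_succ_iff_hasFDerivAt]
    refine ⟨fun x => h ‖x‖ • innerSL ℝ x, ?_, hderiv⟩
    exact (ih h hhs hheven).smul (innerSL ℝ).contDiff

end Aux2

theorem stmt10 (v : ℝ → ℝ) (hv : ContDiffOn ℝ (⊤ : ℕ∞) v (Icc (-1) 1))
    (hveven : ∀ x, v (-x) = v x)
    (hvconv : StrictConvexOn ℝ (Icc (-1) 1) v)
    (hv0 : v 0 = 0)
    (hodd : ∀ n : ℕ, Odd n → iteratedDerivWithin n v (Icc (-1) 1) 0 = 0)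
    (u : EuclideanSpace ℝ (Fin 2) → ℝ) (hu : ∀ x, u x = v ‖x‖) :
    StrictConvexOn ℝ (Metric.closedBall (0 : EuclideanSpace ℝ (Fin 2)) 1) u ∧
      ContDiffOn ℝ (⊤ : ℕ∞) u (Metric.closedBall (0 : EuclideanSpace ℝ (Fin 2)) 1) := by
  have hueq : u = fun y => v ‖y‖ := funext hu
  have hmono : ∀ a b : ℝ, 0 ≤ a → a < b → b ≤ 1 → v a < v b :=
    fun a b ha hab hb => even_strictConvex_lt_aux hvconv hveven ha hab hb
  have hmono' : ∀ a b : ℝ, 0 ≤ a → a ≤ b → b ≤ 1 → v a ≤ v b := by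
    intro a b ha hab hb
    rcases eq_or_lt_of_le hab with rfl | h
    · exact le_rfl
    · exact (hmono a b ha h hb).le
  constructor
  · -- strict convexity
    refine ⟨convex_closedBall _ _, ?_⟩
    intro x hx y hy hxy a b ha hb hab
    rw [Metric.mem_closedBall, dist_zero_right] at hx hy
    simp only [hu, smul_eq_mul]
    have hcomb : ‖a • x + b • y‖ ≤ a * ‖x‖ + b * ‖y‖ := by
      calc ‖a • x + b • y‖ ≤ ‖a • x‖ + ‖b • y‖ := norm_add_le _ _
        _ = a * ‖x‖ + b * ‖y‖ := by
            rw [norm_smul, norm_smul, Real.norm_of_nonneg ha.le, Real.norm_of_nonneg hb.le]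
    by_cases hne : ‖x‖ = ‖y‖
    · have hxpos : 0 < ‖x‖ := by
        rcases eq_or_lt_of_le (norm_nonneg x) with h | h
        · exfalso; apply hxy
          have hx0 : x = 0 := norm_eq_zero.1 h.symm
          have hy0 : y = 0 := norm_eq_zero.1 (by rw [← hne, ← h])
          rw [hx0, hy0]
        · exact h
      have hlt : ‖a • x + b • y‖ < ‖x‖ :=
        norm_combo_lt_of_ne le_rfl hne.ge hxy ha hb hab
      have := hmono _ _ (norm_nonneg _) hlt hx
      calc v ‖a • x + b • y‖ < v ‖x‖ := this
        _ = a * v ‖x‖ + b * v ‖y‖ := by rw [← hne]; linear_combination (-(v ‖x‖)) * hab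
    · have hsx : ‖x‖ ∈ Icc (-1 : ℝ) 1 := ⟨by linarith [norm_nonneg x], hx⟩
      have hsy : ‖y‖ ∈ Icc (-1 : ℝ) 1 := ⟨by linarith [norm_nonneg y], hy⟩
      have h2 : v (a * ‖x‖ + b * ‖y‖) < a * v ‖x‖ + b * v ‖y‖ := by
        have := hvconv.2 hsx hsy hne ha hb hab
        simpa using this
      have hub : a * ‖x‖ + b * ‖y‖ ≤ 1 := by nlinarith [mul_le_mul_of_nonneg_left hx ha.le, mul_le_mul_of_nonneg_left hy hb.le]
      have h1 : v ‖a • x + b • y‖ ≤ v (a * ‖x‖ + b * ‖y‖) := by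
        apply hmono' _ _ (norm_nonneg _) hcomb hub
      linarith
  · -- smoothness
    let φ : ContDiffBump (0 : ℝ) := ⟨1/4, 1/2, by norm_num, by norm_num⟩
    set w : ℝ → ℝ := fun t => φ t * φ (-t) * v t with hwdef
    have hwe : ∀ x, w (-x) = w x := by
      intro x
      simp only [hwdef, neg_neg, hveven]
      ring
    have hws : ContDiff ℝ (⊤ : ℕ∞) w := by
      rw [contDiff_iff_contDiffAt]
      intro t
      by_cases ht : |t| < 1
      · have hvt : ContDiffAt ℝ (⊤ : ℕ∞) v t :=
          hv.contDiffAt (Icc_mem_nhds (by linarith [neg_abs_le t]) (by linarith [le_abs_self t]))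
        exact ((φ.contDiff.contDiffAt).mul (φ.contDiff.comp contDiff_neg).contDiffAt).mul hvt
      · push_neg at ht
        have hev : (fun _ => (0:ℝ)) =ᶠ[nhds t] w := by
          filter_upwards [(isOpen_lt continuous_const continuous_abs).mem_nhds
            (show (1/2 : ℝ) < |t| by linarith)] with s hs
          have h0 : φ s = 0 := φ.zero_of_le_dist (by
            rw [Real.dist_eq, sub_zero]
            exact hs.le)
          simp [hwdef, h0]
        exact contDiffAt_const.congr_of_eventuallyEq hev.symm
    have hwu : ContDiff ℝ (⊤ : ℕ∞) (fun x : EuclideanSpace ℝ (Fin 2) => w ‖x‖) :=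
      contDiff_infty.2 fun n => smooth_even_norm_aux n w hws hwe
    intro x hx
    rcases eq_or_ne x 0 with rfl | hx0
    · have hev : u =ᶠ[nhds 0] fun y : EuclideanSpace ℝ (Fin 2) => w ‖y‖ := by
        filter_upwards [Metric.ball_mem_nhds (0 : EuclideanSpace ℝ (Fin 2))
          (show (0:ℝ) < 1/4 by norm_num)] with y hy
        rw [Metric.mem_ball, dist_zero_right] at hy
        have h1 : φ ‖y‖ = 1 := φ.one_of_mem_closedBall (by
          rw [Metric.mem_closedBall, Real.dist_eq, sub_zero, abs_of_nonneg (norm_nonneg _)]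
          exact hy.le)
        have h2 : φ (-‖y‖) = 1 := φ.one_of_mem_closedBall (by
          rw [Metric.mem_closedBall, Real.dist_eq, sub_zero, abs_neg,
            abs_of_nonneg (norm_nonneg _)]
          exact hy.le)
        simp [hwdef, h1, h2, hu]
      exact (hwu.contDiffAt.congr_of_eventuallyEq hev).contDiffWithinAt
    · rw [Metric.mem_closedBall, dist_zero_right] at hx
      have hmx : ‖x‖ ∈ Icc (-1 : ℝ) 1 := ⟨by linarith [norm_nonneg x], hx⟩
      have hmaps : MapsTo (fun y : EuclideanSpace ℝ (Fin 2) => ‖y‖)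
          (Metric.closedBall (0 : EuclideanSpace ℝ (Fin 2)) 1) (Icc (-1 : ℝ) 1) := by
        intro y hy
        rw [Metric.mem_closedBall, dist_zero_right] at hy
        exact ⟨by linarith [norm_nonneg y], hy⟩
      have := (hv ‖x‖ hmx).comp x (contDiffAt_norm ℝ hx0).contDiffWithinAt hmaps
      rw [hueq]
      exact this
end

section
/- Corollary: There exist a smooth strictly convex u on the closed unit disk and a compactly supported Lipschitz h on the open unit disk such that sup_Ω |u_t - (u_t)**| is NOT O(t²) as t→0⁺, where u_t = u + t·h. -/
open Set Filter Asymptotics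

/-- The Γ-regularization of `u`: pointwise supremum of all affine functions on `ℝⁿ`
that are `≤ u` on `Ω`. -/
noncomputable def gammaReg {n : ℕ} (Ω : Set (EuclideanSpace ℝ (Fin n)))
    (u : EuclideanSpace ℝ (Fin n) → ℝ) (x : EuclideanSpace ℝ (Fin n)) : ℝ :=
  sSup {c | ∃ a : EuclideanSpace ℝ (Fin n) →ᵃ[ℝ] ℝ, (∀ y ∈ Ω, a y ≤ u y) ∧ c = a x}

namespace Stmt16Aux

noncomputable def U (x : EuclideanSpace ℝ (Fin 2)) : ℝ := ‖x‖ ^ 4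

noncomputable def H (x : EuclideanSpace ℝ (Fin 2)) : ℝ := max 0 (2⁻¹ - ‖x‖)

lemma U_nonneg (x : EuclideanSpace ℝ (Fin 2)) : 0 ≤ U x := by unfold U; positivity

lemma H_nonneg (x : EuclideanSpace ℝ (Fin 2)) : 0 ≤ H x := le_max_left _ _

lemma H_le (x : EuclideanSpace ℝ (Fin 2)) : H x ≤ 2⁻¹ := by
  apply max_le (by norm_num)
  have := norm_nonneg x; linarith

lemma U_smooth : ContDiff ℝ (⊤ : ℕ∞) U := by
  have h : ContDiff ℝ (⊤ : ℕ∞) fun x : EuclideanSpace ℝ (Fin 2) => ‖x‖ ^ 2 :=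
    contDiff_norm_sq ℝ
  have h2 := h.pow 2
  have : U = fun x : EuclideanSpace ℝ (Fin 2) => (‖x‖ ^ 2) ^ 2 := by
    funext x; simp [U]; ring
  rw [this]; exact h2

lemma U_strictConvex :
    StrictConvexOn ℝ (Metric.closedBall (0 : EuclideanSpace ℝ (Fin 2)) 1) U := by
  refine ⟨convex_closedBall _ _, ?_⟩
  intro x _ y _ hne a b ha hb hab
  show ‖a • x + b • y‖ ^ 4 < a * U x + b * U y
  have hcomb : ‖a • x + b • y‖ ≤ a * ‖x‖ + b * ‖y‖ := by
    calc ‖a • x + b • y‖ ≤ ‖a • x‖ + ‖b • y‖ := norm_add_le _ _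
    _ = a * ‖x‖ + b * ‖y‖ := by
        rw [norm_smul, norm_smul, Real.norm_eq_abs, Real.norm_eq_abs,
          abs_of_pos ha, abs_of_pos hb]
  by_cases hxy : ‖x‖ = ‖y‖
  · have h1 : ‖a • x + b • y‖ < ‖x‖ :=
      norm_combo_lt_of_ne le_rfl hxy.ge hne ha hb hab
    have h2 : ‖a • x + b • y‖ ^ 4 < ‖x‖ ^ 4 :=
      pow_lt_pow_left₀ h1 (norm_nonneg _) (by norm_num)
    have : a * U x + b * U y = ‖x‖ ^ 4 := by
      simp only [U, ← hxy]; rw [← add_mul, hab, one_mul]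
    linarith
  · have hsc := strictConvexOn_pow (n := 4) (by norm_num)
    have h3 := hsc.2 (mem_Ici.2 (norm_nonneg x)) (mem_Ici.2 (norm_nonneg y)) hxy ha hb hab
    simp only [smul_eq_mul] at h3
    have h4 : ‖a • x + b • y‖ ^ 4 ≤ (a * ‖x‖ + b * ‖y‖) ^ 4 :=
      pow_le_pow_left₀ (norm_nonneg _) hcomb 4
    simp only [U]
    linarith

lemma H_lip : LipschitzWith 1 H := by
  apply LipschitzWith.of_dist_le_mul
  intro x y
  rw [Real.dist_eq, NNReal.coe_one, one_mul]
  have h1 : |H x - H y| ≤ |(2⁻¹ - ‖x‖) - (2⁻¹ - ‖y‖)| := by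
    simpa [H, max_comm] using abs_max_sub_max_le_abs (2⁻¹ - ‖x‖) (2⁻¹ - ‖y‖) 0
  have h2 : |(2⁻¹ - ‖x‖) - (2⁻¹ - ‖y‖)| = |‖y‖ - ‖x‖| := by ring_nf
  have h3 : |‖y‖ - ‖x‖| ≤ ‖y - x‖ := abs_norm_sub_norm_le _ _
  have h4 : ‖y - x‖ = dist x y := by rw [dist_comm, dist_eq_norm]
  calc |H x - H y| ≤ |(2⁻¹ - ‖x‖) - (2⁻¹ - ‖y‖)| := h1
    _ = |‖y‖ - ‖x‖| := h2
    _ ≤ ‖y - x‖ := h3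
    _ = dist x y := h4

lemma H_zero {x : EuclideanSpace ℝ (Fin 2)}
    (hx : x ∉ Metric.closedBall (0 : EuclideanSpace ℝ (Fin 2)) 2⁻¹) : H x = 0 := by
  rw [Metric.mem_closedBall, dist_zero_right, not_le] at hx
  apply max_eq_left
  linarith

lemma H_supp : tsupport H ⊆ Metric.closedBall (0 : EuclideanSpace ℝ (Fin 2)) 2⁻¹ := by
  apply closure_minimal _ Metric.isClosed_closedBall
  intro x hx
  by_contra hc
  exact hx (H_zero hc)

lemma H_compact : HasCompactSupport H :=
  HasCompactSupport.intro (isCompact_closedBall _ _) (fun _ hx => H_zero hx)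

end Stmt16Aux

open Stmt16Aux in
theorem stmt16 (Ω : Set (EuclideanSpace ℝ (Fin 2)))
    (hΩ : Ω = Metric.ball 0 1) :
    ∃ u h : EuclideanSpace ℝ (Fin 2) → ℝ,
      ContDiffOn ℝ (⊤ : ℕ∞) u (Metric.closedBall 0 1) ∧
      StrictConvexOn ℝ (Metric.closedBall 0 1) u ∧
      (∃ K : NNReal, LipschitzWith K h) ∧
      HasCompactSupport h ∧ tsupport h ⊆ Ω ∧
      ¬ ((fun t => sSup ((fun x =>
            |(u x + t * h x) - gammaReg Ω (fun y => u y + t * h y) x|) '' Ω))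
          =O[nhdsWithin 0 (Ioi 0)] fun t => t ^ 2) := by
  subst hΩ
  refine ⟨U, H, U_smooth.contDiffOn, U_strictConvex, ⟨1, H_lip⟩, H_compact,
    H_supp.trans (Metric.closedBall_subset_ball (by norm_num)), ?_⟩
  intro hO
  obtain ⟨C₀, hC⟩ := hO.bound
  obtain ⟨C, hC1, hC'⟩ : ∃ C : ℝ, 1 ≤ C ∧ ∀ᶠ t in nhdsWithin (0 : ℝ) (Ioi 0),
      ‖sSup ((fun x => |(U x + t * H x) -
        gammaReg (Metric.ball 0 1) (fun y => U y + t * H y) x|) '' (Metric.ball 0 1))‖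
        ≤ C * ‖t ^ 2‖ := by
    refine ⟨|C₀| + 1, by linarith [abs_nonneg C₀], ?_⟩
    filter_upwards [hC] with t ht
    refine ht.trans (mul_le_mul_of_nonneg_right ?_ (norm_nonneg _))
    calc C₀ ≤ |C₀| := le_abs_self _
      _ ≤ |C₀| + 1 := by linarith
  have hCpos : (0 : ℝ) < C := by linarith
  rw [Filter.eventually_iff, mem_nhdsGT_iff_exists_Ioo_subset] at hC'
  obtain ⟨δ, hδ, hsub⟩ := hC'
  rw [mem_Ioi] at hδ
  -- choose the scale s
  obtain ⟨s, hs0, hsδ, hshalf, hsC⟩ : ∃ s : ℝ, 0 < s ∧ s ≤ δ / 2 ∧ s ≤ 2⁻¹ ∧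
      s ≤ 7 / (16 * C) := by
    refine ⟨min (δ / 2) (min 2⁻¹ (7 / (16 * C))), ?_, min_le_left _ _,
      (min_le_right _ _).trans (min_le_left _ _),
      (min_le_right _ _).trans (min_le_right _ _)⟩
    apply lt_min (by linarith)
    apply lt_min (by norm_num)
    positivity
  obtain ⟨t, htdef⟩ : ∃ t : ℝ, t = s ^ 3 := ⟨_, rfl⟩
  have ht0 : 0 < t := by rw [htdef]; positivity
  have htδ : t < δ := by
    have hcube : s ^ 3 ≤ s := by nlinarith [sq_nonneg s, hs0.le, hshalf]
    rw [htdef]; linarith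
  have htmem : t ∈ Ioo (0 : ℝ) δ := ⟨ht0, htδ⟩
  have hbound := hsub htmem
  simp only [mem_setOf_eq] at hbound
  -- the witness points
  obtain ⟨p, hp⟩ : ∃ p : EuclideanSpace ℝ (Fin 2),
      p = (s / 2) • (EuclideanSpace.single (0 : Fin 2) (1 : ℝ)) := ⟨_, rfl⟩
  have hnorm_p : ‖p‖ = s / 2 := by
    rw [hp, norm_smul, Real.norm_eq_abs, abs_of_pos (by linarith),
      EuclideanSpace.norm_single, norm_one, mul_one]
  have hnorm_np : ‖-p‖ = s / 2 := by rw [norm_neg, hnorm_p]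
  have hpΩ : p ∈ Metric.ball (0 : EuclideanSpace ℝ (Fin 2)) 1 := by
    rw [Metric.mem_ball, dist_zero_right, hnorm_p]; linarith
  have hnpΩ : -p ∈ Metric.ball (0 : EuclideanSpace ℝ (Fin 2)) 1 := by
    rw [Metric.mem_ball, dist_zero_right, hnorm_np]; linarith
  have h0Ω : (0 : EuclideanSpace ℝ (Fin 2)) ∈ Metric.ball (0 : EuclideanSpace ℝ (Fin 2)) 1 := by
    rw [Metric.mem_ball, dist_self]; norm_num
  have hft_nonneg : ∀ y, 0 ≤ U y + t * H y := fun y =>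
    add_nonneg (U_nonneg y) (mul_nonneg ht0.le (H_nonneg y))
  -- upper bound on all elements of gammaReg's defining set
  have hS_le : ∀ x ∈ Metric.ball (0 : EuclideanSpace ℝ (Fin 2)) 1,
      ∀ c ∈ {c | ∃ a : EuclideanSpace ℝ (Fin 2) →ᵃ[ℝ] ℝ,
        (∀ y ∈ Metric.ball (0 : EuclideanSpace ℝ (Fin 2)) 1, a y ≤ U y + t * H y) ∧ c = a x},
      c ≤ U x + t * H x := by
    rintro x hx c ⟨a, ha, rfl⟩
    exact ha x hx
  have hg_le : ∀ x ∈ Metric.ball (0 : EuclideanSpace ℝ (Fin 2)) 1,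
      gammaReg (Metric.ball 0 1) (fun y => U y + t * H y) x ≤ U x + t * H x := fun x hx =>
    Real.sSup_le (hS_le x hx) (hft_nonneg x)
  have hg_nonneg : ∀ x ∈ Metric.ball (0 : EuclideanSpace ℝ (Fin 2)) 1,
      0 ≤ gammaReg (Metric.ball 0 1) (fun y => U y + t * H y) x := by
    intro x hx
    apply le_csSup ⟨U x + t * H x, fun c hc => hS_le x hx c hc⟩
    refine ⟨AffineMap.const ℝ _ (0 : ℝ), fun y hy => ?_, rfl⟩
    simpa using hft_nonneg y
  -- midpoint upper bound at 0
  have hg_mid : gammaReg (Metric.ball 0 1) (fun y => U y + t * H y) 0 ≤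
      ((U p + t * H p) + (U (-p) + t * H (-p))) / 2 := by
    apply Real.sSup_le
    · rintro c ⟨a, ha, rfl⟩
      have h1 := congrFun a.decomp p
      have h2 := congrFun a.decomp (-p)
      simp only [Pi.add_apply] at h1 h2
      have h3 : a.linear (-p) = -a.linear p := map_neg _ _
      have hsum : a p + a (-p) = 2 * a 0 := by rw [h1, h2, h3]; ring
      have h4 : a p ≤ U p + t * H p := ha p hpΩ
      have h5 : a (-p) ≤ U (-p) + t * H (-p) := ha (-p) hnpΩ
      linarith
    · linarith [hft_nonneg p, hft_nonneg (-p)]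
  -- values
  have hU0 : U (0 : EuclideanSpace ℝ (Fin 2)) = 0 := by simp [U]
  have hH0 : H (0 : EuclideanSpace ℝ (Fin 2)) = 2⁻¹ := by simp [H]
  have hUp : U p = (s / 2) ^ 4 := by rw [U, hnorm_p]
  have hUnp : U (-p) = (s / 2) ^ 4 := by rw [U, hnorm_np]
  have hHp : H p = 2⁻¹ - s / 2 := by
    rw [H, hnorm_p]; apply max_eq_right; linarith
  have hHnp : H (-p) = 2⁻¹ - s / 2 := by
    rw [H, hnorm_np]; apply max_eq_right; linarith
  -- lower bound on the sup
  have hkey : (7 : ℝ) / 16 * s ^ 4 ≤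
      sSup ((fun x => |(U x + t * H x) -
        gammaReg (Metric.ball 0 1) (fun y => U y + t * H y) x|) '' (Metric.ball 0 1)) := by
    have hmem : |(U (0 : EuclideanSpace ℝ (Fin 2)) + t * H 0) -
        gammaReg (Metric.ball 0 1) (fun y => U y + t * H y) 0| ∈
        ((fun x => |(U x + t * H x) -
          gammaReg (Metric.ball 0 1) (fun y => U y + t * H y) x|) '' (Metric.ball 0 1)) :=
      mem_image_of_mem _ h0Ω
    have hbdd : BddAbove ((fun x => |(U x + t * H x) -
        gammaReg (Metric.ball 0 1) (fun y => U y + t * H y) x|) '' (Metric.ball 0 1)) := by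
      refine ⟨1 + t, ?_⟩
      rintro _ ⟨x, hx, rfl⟩
      have hgl := hg_le x hx
      have hgn := hg_nonneg x hx
      have hd : |(U x + t * H x) - gammaReg (Metric.ball 0 1) (fun y => U y + t * H y) x|
          = (U x + t * H x) - gammaReg (Metric.ball 0 1) (fun y => U y + t * H y) x :=
        abs_of_nonneg (by linarith)
      have hx1 : ‖x‖ < 1 := by rwa [Metric.mem_ball, dist_zero_right] at hx
      have hUx : U x ≤ 1 := by
        rw [U]; exact pow_le_one₀ (norm_nonneg x) hx1.le
      have hHx : t * H x ≤ t := by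
        nlinarith [H_le x, H_nonneg x]
      show |(U x + t * H x) - gammaReg (Metric.ball 0 1) (fun y => U y + t * H y) x| ≤ 1 + t
      rw [hd]; linarith
    refine le_trans ?_ (le_csSup hbdd hmem)
    have habs := le_abs_self ((U (0 : EuclideanSpace ℝ (Fin 2)) + t * H 0) -
        gammaReg (Metric.ball 0 1) (fun y => U y + t * H y) 0)
    have hval : ((U p + t * H p) + (U (-p) + t * H (-p))) / 2
        = (s / 2) ^ 4 + t * (2⁻¹ - s / 2) := by
      rw [hUp, hUnp, hHp, hHnp]; ring
    have hgap : (7 : ℝ) / 16 * s ^ 4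
        = (0 + t * 2⁻¹) - ((s / 2) ^ 4 + t * (2⁻¹ - s / 2)) := by
      rw [htdef]; ring
    rw [hU0, hH0] at habs ⊢
    rw [hval] at hg_mid
    rw [hgap]
    linarith [hg_mid, habs]
  -- combine with the O(t²) bound for a contradiction
  have hnorm_t2 : ‖t ^ 2‖ = t ^ 2 := by
    rw [Real.norm_eq_abs, abs_of_nonneg (by positivity)]
  have hfinal : (7 : ℝ) / 16 * s ^ 4 ≤ C * s ^ 6 := by
    have h1 := hkey.trans (le_abs_self _)
    rw [← Real.norm_eq_abs] at h1
    have h2 : C * ‖t ^ 2‖ = C * s ^ 6 := by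
      rw [hnorm_t2, htdef]; ring
    rw [h2] at hbound
    exact h1.trans hbound
  -- s ≤ 7 / (16 C) gives 16 C s ≤ 7
  have h16 : 16 * C * s ≤ 7 := by
    rw [div_eq_mul_inv] at hsC
    have h16C : (0 : ℝ) < 16 * C := by linarith
    calc 16 * C * s ≤ 16 * C * (7 * (16 * C)⁻¹) :=
          mul_le_mul_of_nonneg_left hsC (by linarith)
      _ = 7 := by field_simp
  nlinarith [pow_pos hs0 4, pow_pos hs0 5, sq_nonneg s, hs0.le, hC1,
    mul_pos (pow_pos hs0 4) hCpos]
end
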